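/- arXiv:1601.01342 — 6 statements merged into one kernel-verified Lean document; each statement's English description precedes it below -/
import Mathlib

section
/- Let s̄ > 0 and let Z ∈ ℂ satisfy Re Z > 0 and Im Z > 0. Let D = {w ∈ ℂ : Re w ≥ 0 and |w| ≤ s̄}, and let w* = −s̄·i (the complex number with real part 0 and imaginary part −s̄). Then w* ∈ D, Re(conj(Z)·w*) = −(Im Z)·s̄, and for every w ∈ D one has Re(conj(Z)·w*) ≤ Re(conj(Z)·w), with equality if and only if w = w*. In other words, w* = 0 − s̄·i is the unique minimizer of w ↦ Re(conj(Z)·w) over D. -/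
/-!
`Re(conj Z · w) = Re Z · Re w + Im Z · Im w` splits into two terms that are minimized separately
on the half-disk: the first is `≥ 0` since `Re w ≥ 0`, the second is `≥ -(Im Z) s̄` since
`Im w ≥ -|w| ≥ -s̄`. Both bounds are attained exactly when `Re w = 0` and `Im w = -s̄`, as
`Re Z` and `Im Z` are positive.
-/

open Complex ComplexConjugate

namespace Complex

theorem re_conj_mul (Z w : ℂ) : (conj Z * w).re = Z.re * w.re + Z.im * w.im := by
  simp only [mul_re, conj_re, conj_im]
  ring

theorem neg_le_im_of_norm_le {w : ℂ} {r : ℝ} (hw : ‖w‖ ≤ r) : -r ≤ w.im := by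
  linarith [neg_abs_le w.im, abs_im_le_norm w]

theorem neg_im_mul_le_re_conj_mul {Z w : ℂ} {r : ℝ} (hZre : 0 ≤ Z.re) (hZim : 0 ≤ Z.im)
    (hwre : 0 ≤ w.re) (hw : ‖w‖ ≤ r) : -(Z.im * r) ≤ (conj Z * w).re := by
  have hre : 0 ≤ Z.re * w.re := mul_nonneg hZre hwre
  have him : Z.im * -r ≤ Z.im * w.im := mul_le_mul_of_nonneg_left (neg_le_im_of_norm_le hw) hZim
  rw [re_conj_mul]
  linarith

theorem eq_neg_mul_I_of_re_conj_mul_eq {Z w : ℂ} {r : ℝ} (hZre : 0 < Z.re) (hZim : 0 < Z.im)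
    (hwre : 0 ≤ w.re) (hw : ‖w‖ ≤ r) (heq : (conj Z * w).re = -(Z.im * r)) :
    w = -(r : ℂ) * I := by
  have him : -r ≤ w.im := neg_le_im_of_norm_le hw
  rw [re_conj_mul] at heq
  have hre0 : w.re = 0 := by nlinarith
  have him0 : w.im = -r := by nlinarith
  apply Complex.ext <;> simp [hre0, him0]

end Complex

/-- Theorem 2 (optimal attacker set-points): over the half-disk
`D = {w : Re w ≥ 0, |w| ≤ s̄}`, the point `w* = -s̄·I` is the unique minimizer
of `w ↦ Re(conj(Z)·w)` when `Re Z > 0` and `Im Z > 0`, and the minimum value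
is `-(Im Z)·s̄`. -/
theorem optimal_attacker_setpoint (sbar : ℝ) (hs : 0 < sbar)
    (Z : ℂ) (hR : 0 < Z.re) (hX : 0 < Z.im) :
    ((0:ℝ) ≤ (-(sbar : ℂ) * Complex.I).re ∧
        ‖-(sbar : ℂ) * Complex.I‖ ≤ sbar) ∧
    ((starRingEnd ℂ) Z * (-(sbar : ℂ) * Complex.I)).re = -(Z.im * sbar) ∧
    (∀ w : ℂ, 0 ≤ w.re → ‖w‖ ≤ sbar →
      ((starRingEnd ℂ) Z * (-(sbar : ℂ) * Complex.I)).re ≤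
        ((starRingEnd ℂ) Z * w).re) ∧
    (∀ w : ℂ, 0 ≤ w.re → ‖w‖ ≤ sbar →
      (((starRingEnd ℂ) Z * (-(sbar : ℂ) * Complex.I)).re =
          ((starRingEnd ℂ) Z * w).re ↔ w = -(sbar : ℂ) * Complex.I)) := by
  have hval : (conj Z * (-(sbar : ℂ) * I)).re = -(Z.im * sbar) := by simp
  refine ⟨⟨by simp, by simp [abs_of_pos hs]⟩, hval, ?_, ?_⟩
  · intro w hwre hw
    rw [hval]
    exact neg_im_mul_le_re_conj_mul hR.le hX.le hwre hw
  · intro w hwre hw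
    refine ⟨fun heq => eq_neg_mul_I_of_re_conj_mul_eq hR hX hwre hw ?_, fun h => h ▸ rfl⟩
    rw [← heq, hval]
end

section
/- Let s̄ > 0 and let Z = R + X·i with R > 0 and X > 0. Let D = {w ∈ ℂ : Re w ≥ 0 and |w| ≤ s̄} and let w* = s̄·Z/|Z|. Then w* ∈ D, Re(conj(Z)·w*) = s̄·|Z| = s̄·√(R² + X²), for every w ∈ D one has Re(conj(Z)·w) ≤ Re(conj(Z)·w*), equality holds if and only if w = w*, and the argument of w* equals arctan(X/R). -/
open Complex
open scoped InnerProductSpace ComplexConjugate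

/-!
Identifying `ℂ` with the real inner product space `ℝ²`, `Re(conj Z · w) = ⟪Z, w⟫_ℝ`, so by
Cauchy–Schwarz its maximum over the disk `‖w‖ ≤ s̄` is `‖Z‖ s̄`, attained exactly at the positive
multiple `s̄ Z / ‖Z‖` of `Z`. Since `Re Z > 0` this maximizer lies in the half-plane `Re w ≥ 0`,
so it is also the unique maximizer over the half-disk, and its argument is that of `Z`.
-/

section InnerProductSpace

variable {E : Type*} [NormedAddCommGroup E] [InnerProductSpace ℝ E]

theorem real_inner_le_norm_mul_of_norm_le (x : E) {w : E} {s : ℝ} (hw : ‖w‖ ≤ s) :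
    ⟪x, w⟫_ℝ ≤ ‖x‖ * s :=
  (real_inner_le_norm x w).trans (mul_le_mul_of_nonneg_left hw (norm_nonneg x))

theorem real_inner_div_norm_smul_self {x : E} (hx : x ≠ 0) (s : ℝ) :
    ⟪x, (s / ‖x‖) • x⟫_ℝ = ‖x‖ * s := by
  have hx' : ‖x‖ ≠ 0 := norm_ne_zero_iff.mpr hx
  rw [real_inner_smul_right, real_inner_self_eq_norm_sq]
  field_simp

theorem real_inner_eq_norm_mul_iff_eq_div_norm_smul {x w : E} {s : ℝ} (hx : x ≠ 0)
    (hw : ‖w‖ ≤ s) : ⟪x, w⟫_ℝ = ‖x‖ * s ↔ w = (s / ‖x‖) • x := by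
  have hx' : 0 < ‖x‖ := norm_pos_iff.mpr hx
  refine ⟨fun h => ?_, fun h => h ▸ real_inner_div_norm_smul_self hx s⟩
  have hnorm : ‖w‖ = s :=
    le_antisymm hw (le_of_mul_le_mul_left (h ▸ real_inner_le_norm x w) hx')
  have hparallel : ‖w‖ • x = ‖x‖ • w := inner_eq_norm_mul_iff_real.mp (hnorm ▸ h)
  rw [hnorm] at hparallel
  rw [div_eq_inv_mul, mul_smul, hparallel, inv_smul_smul₀ hx'.ne']

end InnerProductSpace

namespace Complex

theorem conj_mul_re_eq_inner (z w : ℂ) : (conj z * w).re = ⟪z, w⟫_ℝ := by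
  rw [Complex.inner, mul_comm]

theorem ofReal_mul_div_ofReal (s r : ℝ) (z : ℂ) : (s : ℂ) * z / (r : ℂ) = (s / r) • z := by
  rw [real_smul, ofReal_div, div_mul_eq_mul_div]

theorem arg_eq_arctan_of_re_pos {z : ℂ} (hz : 0 < z.re) : arg z = Real.arctan (z.im / z.re) := by
  have hbound := abs_lt.mp (abs_arg_lt_pi_div_two_iff.mpr (Or.inl hz))
  rw [← tan_arg, Real.arctan_tan hbound.1 hbound.2]

end Complex

theorem optimal_defender_setpoint_general (sbar R X : ℝ)
    (hs : 0 < sbar) (hR : 0 < R)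
    (Z : ℂ) (hZ : Z = (R : ℂ) + (X : ℂ) * Complex.I) :
    ((0:ℝ) ≤ ((sbar : ℂ) * Z / (‖Z‖ : ℂ)).re ∧
        ‖(sbar : ℂ) * Z / (‖Z‖ : ℂ)‖ ≤ sbar) ∧
    ((starRingEnd ℂ) Z * ((sbar : ℂ) * Z / (‖Z‖ : ℂ))).re =
        sbar * ‖Z‖ ∧
    sbar * ‖Z‖ = sbar * Real.sqrt (R ^ 2 + X ^ 2) ∧
    (∀ w : ℂ, 0 ≤ w.re → ‖w‖ ≤ sbar →
      ((starRingEnd ℂ) Z * w).re ≤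
        ((starRingEnd ℂ) Z * ((sbar : ℂ) * Z / (‖Z‖ : ℂ))).re) ∧
    (∀ w : ℂ, 0 ≤ w.re → ‖w‖ ≤ sbar →
      (((starRingEnd ℂ) Z * w).re =
          ((starRingEnd ℂ) Z * ((sbar : ℂ) * Z / (‖Z‖ : ℂ))).re ↔
        w = (sbar : ℂ) * Z / (‖Z‖ : ℂ))) ∧
    Complex.arg ((sbar : ℂ) * Z / (‖Z‖ : ℂ)) = Real.arctan (X / R) := by
  have hZre : Z.re = R := by simp [hZ]
  have hZim : Z.im = X := by simp [hZ]
  have hZ0 : Z ≠ 0 := fun h => hR.ne (by simpa [h] using hZre)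
  have hscale : 0 < sbar / ‖Z‖ := div_pos hs (norm_pos_iff.mpr hZ0)
  simp only [ofReal_mul_div_ofReal, conj_mul_re_eq_inner]
  have hmax : ⟪Z, (sbar / ‖Z‖) • Z⟫_ℝ = sbar * ‖Z‖ := by
    rw [real_inner_div_norm_smul_self hZ0, mul_comm]
  refine ⟨⟨?_, ?_⟩, hmax, ?_, fun w _ hw => ?_, fun w _ hw => ?_, ?_⟩
  · rw [smul_re, hZre]
    exact mul_nonneg hscale.le hR.le
  · rw [norm_smul, Real.norm_of_nonneg hscale.le, div_mul_cancel₀ _ (norm_ne_zero_iff.mpr hZ0)]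
  · rw [hZ, norm_add_mul_I]
  · rw [hmax, mul_comm]
    exact real_inner_le_norm_mul_of_norm_le Z hw
  · rw [hmax, mul_comm]
    exact real_inner_eq_norm_mul_iff_eq_div_norm_smul hZ0 hw
  · rw [real_smul, arg_real_mul Z hscale, arg_eq_arctan_of_re_pos (hZre ▸ hR), hZre, hZim]

/-- Proposition 2 (identical r/x ratio case): over the half-disk
`D = {w : Re w ≥ 0, |w| ≤ s̄}`, the point `w* = s̄·Z/|Z|` with `Z = R + X·I`
(`R, X > 0`) is the unique maximizer of `w ↦ Re(conj(Z)·w)`, the maximum value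
is `s̄·|Z| = s̄·√(R²+X²)`, and `arg w* = arctan(X/R)`. -/
theorem optimal_defender_setpoint (sbar R X : ℝ)
    (hs : 0 < sbar) (hR : 0 < R) (hX : 0 < X)
    (Z : ℂ) (hZ : Z = (R : ℂ) + (X : ℂ) * Complex.I) :
    ((0:ℝ) ≤ ((sbar : ℂ) * Z / (‖Z‖ : ℂ)).re ∧
        ‖(sbar : ℂ) * Z / (‖Z‖ : ℂ)‖ ≤ sbar) ∧
    ((starRingEnd ℂ) Z * ((sbar : ℂ) * Z / (‖Z‖ : ℂ))).re =
        sbar * ‖Z‖ ∧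
    sbar * ‖Z‖ = sbar * Real.sqrt (R ^ 2 + X ^ 2) ∧
    (∀ w : ℂ, 0 ≤ w.re → ‖w‖ ≤ sbar →
      ((starRingEnd ℂ) Z * w).re ≤
        ((starRingEnd ℂ) Z * ((sbar : ℂ) * Z / (‖Z‖ : ℂ))).re) ∧
    (∀ w : ℂ, 0 ≤ w.re → ‖w‖ ≤ sbar →
      (((starRingEnd ℂ) Z * w).re =
          ((starRingEnd ℂ) Z * ((sbar : ℂ) * Z / (‖Z‖ : ℂ))).re ↔
        w = (sbar : ℂ) * Z / (‖Z‖ : ℂ))) ∧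
    Complex.arg ((sbar : ℂ) * Z / (‖Z‖ : ℂ)) = Real.arctan (X / R) :=
  optimal_defender_setpoint_general sbar R X hs hR Z hZ
end

section
/- Let V be a finite rooted tree (as in the context) in which every non-root node l carries an impedance z l ∈ ℂ with Re(z l) > 0 and Im(z l) > 0, and define the common path impedances Z(j,k) = ∑_{l ∈ P(j) ∩ P(k)} z l. Let i, j, k ∈ V be such that P(i) ∩ P(j) ⊊ P(i) ∩ P(k) (node j strictly precedes node k relative to the pivot node i). Let s̄ > 0 and sp ∈ ℂ with Re sp ≥ 0, |sp| ≤ s̄, and sp ≠ −s̄·i. Then 2·Re(conj(Z(i,j))·(sp + s̄·i)) < 2·Re(conj(Z(i,k))·(sp + s̄·i)). -/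
/-- A finite rooted tree: a distinguished root and a parent map under which
every node reaches the root, the root is its own parent, and no other node
is its own parent. -/
structure FiniteRootedTree (V : Type*) where
  root : V
  parent : V → V
  parent_root : parent root = root
  parent_ne : ∀ v, v ≠ root → parent v ≠ v
  reaches_root : ∀ v, ∃ n : ℕ, parent^[n] v = root

namespace FiniteRootedTree

variable {V : Type*} [Fintype V] [DecidableEq V]

/-- The children of a node `j`. -/
def children (T : FiniteRootedTree V) (j : V) : Finset V :=
  Finset.univ.filter fun k => k ≠ T.root ∧ T.parent k = j

open Classical in
/-- The subtree `Λ(j)` rooted at `j` (the descendants of `j`, including `j`). -/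
noncomputable def subtree (T : FiniteRootedTree V) (j : V) : Finset V :=
  Finset.univ.filter fun k => ∃ n : ℕ, T.parent^[n] k = j

open Classical in
/-- The path set `P(j)`: the ancestors of `j`, excluding the root and
including `j` itself. -/
noncomputable def pathSet (T : FiniteRootedTree V) (j : V) : Finset V :=
  Finset.univ.filter fun k => k ≠ T.root ∧ ∃ n : ℕ, T.parent^[n] j = k

/-- The depth `d(j)`: the least `n` with `parent^[n] j = root`. -/
noncomputable def depth (T : FiniteRootedTree V) (j : V) : ℕ :=
  Nat.find (T.reaches_root j)

/-- The height `H` of the tree: the maximum depth over all nodes. -/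
noncomputable def height (T : FiniteRootedTree V) : ℕ :=
  Finset.univ.sup fun v => T.depth v

end FiniteRootedTree

open FiniteRootedTree

/-!
Writing `w = sp + s̄·I`, the quantity `Re(conj(Z)·w)` is additive in the impedances summed in `Z`.
Each line impedance `z` of the first quadrant contributes `Re z·Re w + Im z·Im w > 0`, because
`Re w = Re sp ≥ 0` and `Im w = Im sp + s̄ > 0`; the latter holds since `|Im sp| ≤ ‖sp‖ ≤ s̄`, with
equality only at `sp = -s̄·I`. Hence enlarging the common path strictly increases the drop.
-/

open ComplexConjugate

theorem FiniteRootedTree.ne_root_of_mem_pathSet {V : Type*} [Fintype V] [DecidableEq V]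
    {T : FiniteRootedTree V} {j l : V} (hl : l ∈ T.pathSet j) : l ≠ T.root := by
  simp only [FiniteRootedTree.pathSet, Finset.mem_filter] at hl
  exact hl.2.1

theorem Finset.sum_lt_sum_of_ssubset_of_pos {ι M : Type*} [AddCommMonoid M] [PartialOrder M]
    [IsOrderedCancelAddMonoid M] {f : ι → M} {s t : Finset ι} (hst : s ⊂ t)
    (hf : ∀ i ∈ t, 0 < f i) : ∑ i ∈ s, f i < ∑ i ∈ t, f i := by
  obtain ⟨x, hxt, hxs⟩ := Finset.exists_of_ssubset hst
  exact Finset.sum_lt_sum_of_subset hst.subset hxt hxs (hf x hxt)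
    fun i hi _ => (hf i hi).le

theorem Complex.re_conj_sum_mul {ι : Type*} (s : Finset ι) (f : ι → ℂ) (w : ℂ) :
    (conj (∑ i ∈ s, f i) * w).re = ∑ i ∈ s, (conj (f i) * w).re := by
  rw [map_sum, Finset.sum_mul, Complex.re_sum]

theorem Complex.re_conj_mul_pos {z w : ℂ} (hz_re : 0 < z.re) (hz_im : 0 < z.im)
    (hw_re : 0 ≤ w.re) (hw_im : 0 < w.im) : 0 < (conj z * w).re := by
  have hre : (conj z * w).re = z.re * w.re + z.im * w.im := by
    simp [Complex.mul_re]
  rw [hre]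
  positivity

theorem Complex.im_add_pos_of_norm_le {z : ℂ} {s : ℝ} (hz : ‖z‖ ≤ s)
    (hne : z ≠ -(s : ℂ) * Complex.I) : 0 < z.im + s := by
  have him_le : |z.im| ≤ s := (Complex.abs_im_le_norm z).trans hz
  refine lt_of_le_of_ne (by linarith [neg_abs_le z.im]) fun h => hne ?_
  have him : z.im = -s := by linarith
  -- `‖z‖² = Re² + Im² ≤ s² = Im²` forces `Re z = 0`.
  have hnormSq : z.re * z.re + z.im * z.im ≤ s * s := by
    rw [← Complex.normSq_apply, ← Complex.sq_norm, sq]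
    exact mul_self_le_mul_self (norm_nonneg z) hz
  have hre : z.re = 0 := by
    rw [him] at hnormSq
    nlinarith [mul_self_nonneg z.re]
  apply Complex.ext <;> simp [hre, him]

theorem compromise_downstream_worse_general {V : Type*} [Fintype V] [DecidableEq V]
    (T : FiniteRootedTree V) (z : V → ℂ)
    (hz : ∀ l, l ≠ T.root → 0 < (z l).re ∧ 0 < (z l).im)
    (i j k : V)
    (hjk : T.pathSet i ∩ T.pathSet j ⊂ T.pathSet i ∩ T.pathSet k)
    (sbar : ℝ) (sp : ℂ)
    (hsp_re : 0 ≤ sp.re) (hsp_abs : ‖sp‖ ≤ sbar)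
    (hsp_ne : sp ≠ -(sbar : ℂ) * Complex.I) :
    2 * ((starRingEnd ℂ) (∑ l ∈ T.pathSet i ∩ T.pathSet j, z l) *
          (sp + (sbar : ℂ) * Complex.I)).re <
      2 * ((starRingEnd ℂ) (∑ l ∈ T.pathSet i ∩ T.pathSet k, z l) *
          (sp + (sbar : ℂ) * Complex.I)).re := by
  have hw_re : 0 ≤ (sp + (sbar : ℂ) * Complex.I).re := by simpa using hsp_re
  have hw_im : 0 < (sp + (sbar : ℂ) * Complex.I).im := by
    simpa using Complex.im_add_pos_of_norm_le hsp_abs hsp_ne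
  have hterm_pos : ∀ l ∈ T.pathSet i ∩ T.pathSet k,
      0 < (conj (z l) * (sp + (sbar : ℂ) * Complex.I)).re := fun l hl =>
    have hz_l := hz l (ne_root_of_mem_pathSet (Finset.mem_inter.mp hl).1)
    Complex.re_conj_mul_pos hz_l.1 hz_l.2 hw_re hw_im
  rw [Complex.re_conj_sum_mul, Complex.re_conj_sum_mul]
  exact mul_lt_mul_of_pos_left (Finset.sum_lt_sum_of_ssubset_of_pos hjk hterm_pos) two_pos

/-- Proposition 4: for homogeneous DERs with pre-attack set-point `sp` and
apparent power capability `s̄`, if node `j` strictly precedes node `k`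
relative to the pivot node `i` (i.e. `P(i) ∩ P(j) ⊊ P(i) ∩ P(k)`), then the
LPF voltage drop `Δ_j(ν̂_i) = 2·Re(conj(Z(i,j))·(sp + s̄·I))` caused by
compromising the DER at `j` is strictly smaller than the one caused by
compromising the DER at `k`. -/
theorem compromise_downstream_worse {V : Type*} [Fintype V] [DecidableEq V]
    (T : FiniteRootedTree V) (z : V → ℂ)
    (hz : ∀ l, l ≠ T.root → 0 < (z l).re ∧ 0 < (z l).im)
    (i j k : V)
    (hjk : T.pathSet i ∩ T.pathSet j ⊂ T.pathSet i ∩ T.pathSet k)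
    (sbar : ℝ) (hsbar : 0 < sbar) (sp : ℂ)
    (hsp_re : 0 ≤ sp.re) (hsp_abs : ‖sp‖ ≤ sbar)
    (hsp_ne : sp ≠ -(sbar : ℂ) * Complex.I) :
    2 * ((starRingEnd ℂ) (∑ l ∈ T.pathSet i ∩ T.pathSet j, z l) *
          (sp + (sbar : ℂ) * Complex.I)).re <
      2 * ((starRingEnd ℂ) (∑ l ∈ T.pathSet i ∩ T.pathSet k, z l) *
          (sp + (sbar : ℂ) * Complex.I)).re :=
  compromise_downstream_worse_general T z hz i j k hjk sbar sp hsp_re hsp_abs hsp_ne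
end

section
/- Let V be a finite rooted tree (as in the context), z : V → ℂ, ν₀ ∈ ℝ, and s : V → ℂ. Let Ŝ : V → ℂ satisfy Ŝ j = (∑_{k ∈ ch(j)} Ŝ k) + s j for every j ≠ r, and let ν̂ : V → ℝ satisfy ν̂ r = ν₀ and ν̂ j = ν̂(p j) − 2·Re(conj(z j)·Ŝ j) for every j ≠ r. Define Z(j,k) = ∑_{l ∈ P(j) ∩ P(k)} z l. Then for every j ∈ V, ν̂ j = ν₀ − 2·∑_{k ∈ V, k ≠ r} Re(conj(Z(j,k))·s k). -/
open FiniteRootedTree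

/-!
The recursion for `Ŝ` says that `Ŝ l` is the total injection `∑_{k ∈ Λ(l)} s k` of the subtree
below `l` (induction from the leaves), and the recursion for `ν̂` telescopes along the path
from the root: `ν̂ j = ν₀ - 2 ∑_{l ∈ P(j)} Re(conj (z l) · Ŝ l)`. Exchanging the two sums,
`k ∈ Λ(l)` with `l ∈ P(j)` means exactly `l ∈ P(j) ∩ P(k)`, which produces `Z(j,k)`.
-/

namespace FiniteRootedTree

variable {V : Type*} (T : FiniteRootedTree V)

theorem iterate_parent_root (n : ℕ) : T.parent^[n] T.root = T.root :=
  Function.iterate_fixed T.parent_root n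

theorem iterate_succ_parent_ne {v : V} (hv : v ≠ T.root) (n : ℕ) :
    T.parent^[n + 1] v ≠ v := by
  intro hper
  obtain ⟨d, hd⟩ := T.reaches_root v
  have hmul : T.parent^[(n + 1) * d] v = v := Function.IsPeriodicPt.mul_const hper d
  apply hv
  calc v = T.parent^[(n + 1) * d] v := hmul.symm
    _ = T.parent^[(n + 1) * d - d] (T.parent^[d] v) := by
      rw [← Function.iterate_add_apply, Nat.sub_add_cancel (Nat.le_mul_of_pos_left d n.succ_pos)]
    _ = T.root := by rw [hd, iterate_parent_root]

section Depth

variable [DecidableEq V]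

theorem depth_eq_zero_iff {j : V} : T.depth j = 0 ↔ j = T.root :=
  Nat.find_eq_zero (T.reaches_root j)

theorem depth_parent_lt {j : V} (hj : j ≠ T.root) : T.depth (T.parent j) < T.depth j := by
  have hpos : 0 < T.depth j := Nat.pos_of_ne_zero (mt T.depth_eq_zero_iff.mp hj)
  have hreach : T.parent^[T.depth j - 1] (T.parent j) = T.root := by
    rw [← Function.iterate_succ_apply, Nat.succ_eq_add_one, Nat.sub_add_cancel hpos]
    exact Nat.find_spec (T.reaches_root j)
  exact (Nat.find_le hreach).trans_lt (Nat.sub_lt hpos one_pos)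

@[elab_as_elim]
theorem induction_from_root {motive : V → Prop} (root : motive T.root)
    (parent : ∀ j, j ≠ T.root → motive (T.parent j) → motive j) (j : V) : motive j :=
  (measure T.depth).wf.induction j fun j ih =>
    if hj : j = T.root then hj ▸ root else parent j hj (ih _ (T.depth_parent_lt hj))

end Depth

variable [Fintype V]

theorem mem_subtree {j k : V} : k ∈ T.subtree j ↔ ∃ n : ℕ, T.parent^[n] k = j := by
  simp [subtree]

theorem parent_notMem_subtree {k : V} (hk : k ≠ T.root) : T.parent k ∉ T.subtree k := by
  intro hmem
  obtain ⟨n, hn⟩ := T.mem_subtree.mp hmem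
  exact T.iterate_succ_parent_ne hk n hn

theorem mem_subtree_or_mem_subtree_of_mem_subtree {a b x : V} (ha : x ∈ T.subtree a)
    (hb : x ∈ T.subtree b) : a ∈ T.subtree b ∨ b ∈ T.subtree a := by
  obtain ⟨n, rfl⟩ := T.mem_subtree.mp ha
  obtain ⟨m, rfl⟩ := T.mem_subtree.mp hb
  rcases le_total n m with h | h
  · refine Or.inl (T.mem_subtree.mpr ⟨m - n, ?_⟩)
    rw [← Function.iterate_add_apply, Nat.sub_add_cancel h]
  · refine Or.inr (T.mem_subtree.mpr ⟨n - m, ?_⟩)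
    rw [← Function.iterate_add_apply, Nat.sub_add_cancel h]

theorem eq_of_mem_subtree_of_parent_eq {k k' : V} (hk' : k' ≠ T.root)
    (hpar : T.parent k = T.parent k') (hmem : k ∈ T.subtree k') : k = k' := by
  obtain ⟨_ | n, hn⟩ := T.mem_subtree.mp hmem
  · exact hn
  · refine absurd ?_ (T.iterate_succ_parent_ne hk' n)
    rwa [Function.iterate_succ_apply, ← hpar, ← Function.iterate_succ_apply]

variable [DecidableEq V]

theorem depth_le_height (j : V) : T.depth j ≤ T.height :=
  Finset.le_sup (f := T.depth) (Finset.mem_univ j)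

theorem mem_pathSet {j k : V} :
    k ∈ T.pathSet j ↔ k ≠ T.root ∧ ∃ n : ℕ, T.parent^[n] j = k := by
  simp [pathSet]

theorem pathSet_root : T.pathSet T.root = ∅ := by
  ext k
  simp only [mem_pathSet, iterate_parent_root, Finset.notMem_empty, iff_false, not_and]
  rintro hk ⟨-, rfl⟩
  exact hk rfl

theorem notMem_pathSet_parent {j : V} (hj : j ≠ T.root) : j ∉ T.pathSet (T.parent j) := by
  intro hmem
  obtain ⟨-, n, hn⟩ := T.mem_pathSet.mp hmem
  exact T.iterate_succ_parent_ne hj n hn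

theorem pathSet_eq_insert {j : V} (hj : j ≠ T.root) :
    T.pathSet j = insert j (T.pathSet (T.parent j)) := by
  ext l
  simp only [Finset.mem_insert, mem_pathSet]
  constructor
  · rintro ⟨hl, _ | n, hn⟩
    · exact Or.inl hn.symm
    · exact Or.inr ⟨hl, n, hn⟩
  · rintro (rfl | ⟨hl, n, hn⟩)
    · exact ⟨hj, 0, rfl⟩
    · exact ⟨hl, n + 1, hn⟩

theorem mem_subtree_iff_mem_pathSet {l k : V} (hl : l ≠ T.root) :
    k ∈ T.subtree l ↔ k ≠ T.root ∧ l ∈ T.pathSet k := by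
  simp only [mem_subtree, mem_pathSet, hl, ne_eq, not_false_eq_true, true_and]
  refine ⟨fun h => ⟨?_, h⟩, And.right⟩
  rintro rfl
  obtain ⟨n, rfl⟩ := h
  exact hl (T.iterate_parent_root n)

theorem mem_children {j k : V} : k ∈ T.children j ↔ k ≠ T.root ∧ T.parent k = j := by
  simp [children]

@[elab_as_elim]
theorem induction_from_leaves {motive : V → Prop}
    (children : ∀ j, (∀ k ∈ T.children j, motive k) → motive j) (j : V) : motive j :=
  (measure fun j => T.height - T.depth j).wf.induction j fun j ih =>
    children j fun k hkj => ih k <| by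
      obtain ⟨hk, rfl⟩ := T.mem_children.mp hkj
      have := T.depth_parent_lt hk
      have := T.depth_le_height k
      show T.height - T.depth k < T.height - T.depth (T.parent k)
      omega

theorem subtree_eq_insert_biUnion {j : V} (hj : j ≠ T.root) :
    T.subtree j = insert j ((T.children j).biUnion T.subtree) := by
  ext x
  simp only [Finset.mem_insert, Finset.mem_biUnion, mem_subtree, mem_children]
  constructor
  · rintro ⟨_ | n, hn⟩
    · exact Or.inl hn
    · rw [Function.iterate_succ_apply'] at hn
      refine Or.inr ⟨T.parent^[n] x, ⟨fun hroot => hj ?_, hn⟩, n, rfl⟩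
      rw [← hn, hroot, T.parent_root]
  · rintro (rfl | ⟨k, ⟨-, rfl⟩, n, rfl⟩)
    · exact ⟨0, rfl⟩
    · exact ⟨n + 1, Function.iterate_succ_apply' ..⟩

theorem notMem_biUnion_subtree_children (j : V) : j ∉ (T.children j).biUnion T.subtree := by
  simp only [Finset.mem_biUnion, mem_children, not_exists, not_and, and_imp]
  rintro k hk rfl
  exact T.parent_notMem_subtree hk

theorem pairwiseDisjoint_subtree_children (j : V) :
    (T.children j : Set V).PairwiseDisjoint T.subtree := by
  intro k hkj k' hk'j hne
  obtain ⟨hk, rfl⟩ := T.mem_children.mp hkj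
  obtain ⟨hk', hpar⟩ := T.mem_children.mp hk'j
  refine Finset.disjoint_left.mpr fun x hx hx' => hne ?_
  rcases T.mem_subtree_or_mem_subtree_of_mem_subtree hx hx' with h | h
  · exact T.eq_of_mem_subtree_of_parent_eq hk' hpar.symm h
  · exact (T.eq_of_mem_subtree_of_parent_eq hk hpar h).symm

theorem eq_sum_subtree_of_eq_sum_children_add {M : Type*} [AddCommMonoid M] {S s : V → M}
    (hS : ∀ j, j ≠ T.root → S j = (∑ k ∈ T.children j, S k) + s j) {j : V}
    (hj : j ≠ T.root) : S j = ∑ k ∈ T.subtree j, s k := by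
  induction j using T.induction_from_leaves with
  | children j ih =>
    rw [hS j hj, T.subtree_eq_insert_biUnion hj,
      Finset.sum_insert (T.notMem_biUnion_subtree_children j),
      Finset.sum_biUnion (T.pairwiseDisjoint_subtree_children j), add_comm]
    congr 1
    exact Finset.sum_congr rfl fun k hk => ih k hk (T.mem_children.mp hk).1

theorem eq_add_sum_pathSet_of_eq_parent_add {M : Type*} [AddCommMonoid M] {f g : V → M}
    (hf : ∀ j, j ≠ T.root → f j = f (T.parent j) + g j) (j : V) :
    f j = f T.root + ∑ l ∈ T.pathSet j, g l := by
  induction j using T.induction_from_root with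
  | root => simp [pathSet_root]
  | parent j hj ih =>
    rw [hf j hj, ih, T.pathSet_eq_insert hj, Finset.sum_insert (T.notMem_pathSet_parent hj),
      add_assoc, add_comm (g j)]

theorem sum_pathSet_mul_sum_subtree {R : Type*} [NonUnitalNonAssocSemiring R] (a b : V → R)
    (j : V) : ∑ l ∈ T.pathSet j, a l * ∑ k ∈ T.subtree l, b k =
      ∑ k ∈ Finset.univ.filter (fun k => k ≠ T.root),
        (∑ l ∈ T.pathSet j ∩ T.pathSet k, a l) * b k := by
  simp_rw [Finset.mul_sum, Finset.sum_mul]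
  refine Finset.sum_comm' fun l k => ?_
  by_cases hl : l ∈ T.pathSet j
  · simp [hl, T.mem_subtree_iff_mem_pathSet (T.mem_pathSet.mp hl).1, and_comm]
  · simp [hl]

end FiniteRootedTree

/-- Lemma 1 (equation (10c)): under the LPF model, the squared nodal voltage
has the closed form `ν̂ j = ν₀ − 2·∑_{k ≠ r} Re(conj(Z(j,k))·s k)`, where
`Z(j,k) = ∑_{l ∈ P(j) ∩ P(k)} z l` is the common path impedance. -/
theorem lpf_voltage_closed_form {V : Type*} [Fintype V] [DecidableEq V]
    (T : FiniteRootedTree V) (z : V → ℂ) (ν₀ : ℝ) (s : V → ℂ)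
    (Shat : V → ℂ)
    (hS : ∀ j, j ≠ T.root → Shat j = (∑ k ∈ T.children j, Shat k) + s j)
    (nuhat : V → ℝ) (hroot : nuhat T.root = ν₀)
    (hrec : ∀ j, j ≠ T.root →
      nuhat j = nuhat (T.parent j) - 2 * ((starRingEnd ℂ) (z j) * Shat j).re) :
    ∀ j, nuhat j = ν₀ - 2 * ∑ k ∈ Finset.univ.filter (fun k => k ≠ T.root),
      ((starRingEnd ℂ) (∑ l ∈ T.pathSet j ∩ T.pathSet k, z l) * s k).re := by
  intro j
  have hpath := T.eq_add_sum_pathSet_of_eq_parent_add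
    (f := nuhat) (g := fun l => -2 * ((starRingEnd ℂ) (z l) * Shat l).re)
    (fun j hj => by rw [hrec j hj]; ring) j
  have hsum : ∑ l ∈ T.pathSet j, ((starRingEnd ℂ) (z l) * Shat l).re =
      ∑ k ∈ Finset.univ.filter (fun k => k ≠ T.root),
        ((starRingEnd ℂ) (∑ l ∈ T.pathSet j ∩ T.pathSet k, z l) * s k).re := by
    calc ∑ l ∈ T.pathSet j, ((starRingEnd ℂ) (z l) * Shat l).re
        = (∑ l ∈ T.pathSet j, (starRingEnd ℂ) (z l) * ∑ k ∈ T.subtree l, s k).re := by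
          rw [Complex.re_sum]
          refine Finset.sum_congr rfl fun l hl => ?_
          rw [T.eq_sum_subtree_of_eq_sum_children_add hS (T.mem_pathSet.mp hl).1]
      _ = _ := by
          rw [T.sum_pathSet_mul_sum_subtree, Complex.re_sum]
          simp_rw [map_sum]
  rw [hpath, hroot, ← Finset.mul_sum, hsum]
  ring
end

section
/- Let V be a finite rooted tree (as in the context) and ν₀ ∈ ℝ. For every j ≠ r let r_j ≥ 0, x_j ≥ 0, ℓ_j ≥ 0 and let P_j, Q_j, P̌_j, Q̌_j be real numbers with P_j ≤ P̌_j and Q_j ≤ Q̌_j. Let ν, ν̌ : V → ℝ satisfy ν r = ν̌ r = ν₀ and, for every j ≠ r, ν j = ν(p j) − 2·(r_j·P_j + x_j·Q_j) + (r_j² + x_j²)·ℓ_j and ν̌ j = ν̌(p j) − 2·(r_j·P̌_j + x_j·Q̌_j). Then ν j ≥ ν̌ j for every j ∈ V. -/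
namespace FiniteRootedTree

variable {V : Type*} (T : FiniteRootedTree V)

theorem induction {p : V → Prop} (root : p T.root)
    (step : ∀ j, j ≠ T.root → p (T.parent j) → p j) : ∀ j, p j := by
  suffices h : ∀ n j, T.parent^[n] j = T.root → p j from
    fun j => (T.reaches_root j).elim (h · j)
  intro n
  induction n with
  | zero => rintro j rfl; exact root
  | succ n ih =>
    intro j hj
    by_cases hroot : j = T.root
    · exact hroot ▸ root
    · exact step j hroot (ih _ hj)

theorem le_of_root_le_of_increment_le {f g : V → ℝ} (hroot : f T.root ≤ g T.root)
    (hstep : ∀ j, j ≠ T.root → f j - f (T.parent j) ≤ g j - g (T.parent j)) :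
    ∀ j, f j ≤ g j :=
  T.induction hroot fun j hj hparent => by linarith [hstep j hj]

end FiniteRootedTree

open FiniteRootedTree

theorem npf_voltage_ge_epsLPF_general {V : Type*}
    (T : FiniteRootedTree V) (ν₀ : ℝ)
    (r x ℓ P Q Pc Qc : V → ℝ)
    (hr : ∀ j, j ≠ T.root → 0 ≤ r j)
    (hx : ∀ j, j ≠ T.root → 0 ≤ x j)
    (hℓ : ∀ j, j ≠ T.root → 0 ≤ ℓ j)
    (hP : ∀ j, j ≠ T.root → P j ≤ Pc j)
    (hQ : ∀ j, j ≠ T.root → Q j ≤ Qc j)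
    (ν νc : V → ℝ)
    (hνroot : ν T.root = ν₀) (hνcroot : νc T.root = ν₀)
    (hνrec : ∀ j, j ≠ T.root →
      ν j = ν (T.parent j) - 2 * (r j * P j + x j * Q j) + (r j ^ 2 + x j ^ 2) * ℓ j)
    (hνcrec : ∀ j, j ≠ T.root →
      νc j = νc (T.parent j) - 2 * (r j * Pc j + x j * Qc j)) :
    ∀ j, νc j ≤ ν j := by
  refine T.le_of_root_le_of_increment_le (hνcroot.trans hνroot.symm).le fun j hj => ?_
  have hflow : r j * P j + x j * Q j ≤ r j * Pc j + x j * Qc j :=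
    add_le_add (mul_le_mul_of_nonneg_left (hP j hj) (hr j hj))
      (mul_le_mul_of_nonneg_left (hQ j hj) (hx j hj))
  have hloss : 0 ≤ (r j ^ 2 + x j ^ 2) * ℓ j := mul_nonneg (by positivity) (hℓ j hj)
  rw [hνrec j hj, hνcrec j hj]
  linarith

/-- Voltage-comparison half of Proposition 1: if the nonlinear-model line
flows `(P, Q)` are dominated componentwise by the ε-LPF flows `(P̌, Q̌)`, the
resistances, reactances and squared current magnitudes are nonnegative, then
the nonlinear squared voltages `ν` (which include the loss term
`(r² + x²)·ℓ`) dominate the ε-LPF squared voltages `ν̌`. -/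
theorem npf_voltage_ge_epsLPF {V : Type*} [Fintype V] [DecidableEq V]
    (T : FiniteRootedTree V) (ν₀ : ℝ)
    (r x ℓ P Q Pc Qc : V → ℝ)
    (hr : ∀ j, j ≠ T.root → 0 ≤ r j)
    (hx : ∀ j, j ≠ T.root → 0 ≤ x j)
    (hℓ : ∀ j, j ≠ T.root → 0 ≤ ℓ j)
    (hP : ∀ j, j ≠ T.root → P j ≤ Pc j)
    (hQ : ∀ j, j ≠ T.root → Q j ≤ Qc j)
    (ν νc : V → ℝ)
    (hνroot : ν T.root = ν₀) (hνcroot : νc T.root = ν₀)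
    (hνrec : ∀ j, j ≠ T.root →
      ν j = ν (T.parent j) - 2 * (r j * P j + x j * Q j) + (r j ^ 2 + x j ^ 2) * ℓ j)
    (hνcrec : ∀ j, j ≠ T.root →
      νc j = νc (T.parent j) - 2 * (r j * Pc j + x j * Qc j)) :
    ∀ j, νc j ≤ ν j :=
  npf_voltage_ge_epsLPF_general T ν₀ r x ℓ P Q Pc Qc hr hx hℓ hP hQ ν νc hνroot hνcroot hνrec hνcrec
end

section
/- Let Ψ and I be nonempty finite types, v̂ : Ψ → I → ℝ, and let ν₀, ν̲ ∈ ℝ, W > 0, ε > 0. Define v̌ : Ψ → I → ℝ by v̌ ψ i = ν₀ + (1+ε)·(v̂ ψ i − ν₀), and define L̂ ψ = max_{i ∈ I} W·max(ν̲ − v̂ ψ i, 0) and Ľ ψ = max_{i ∈ I} W·max(ν̲ − v̌ ψ i, 0). If max_{ψ ∈ Ψ} L̂ ψ > 0 and max_{ψ ∈ Ψ} Ľ ψ > 0, then {ψ ∈ Ψ : L̂ ψ = max_{ψ'} L̂ ψ'} = {ψ ∈ Ψ : Ľ ψ = max_{ψ'} Ľ ψ'}. -/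
/-!
Both losses are obtained by applying an antitone hinge `x ↦ W · (ν̲ - x)₊` to the voltages, and
`v̌ ψ` is an increasing affine image of `v̂ ψ`; hence each loss is a function of the minimal voltage
`minᵢ v̂ ψ i` alone, antitone and strictly decreasing wherever it is positive. A positive maximal
loss is therefore attained exactly at the attacks minimising `minᵢ v̂ ψ i`, for either model.
-/

open Finset

section Extremal

variable {ι α β : Type*} [LinearOrder α] [LinearOrder β]

theorem Antitone.sup'_comp_eq_apply_inf' {g : α → β} (hg : Antitone g) {s : Finset ι}
    (hs : s.Nonempty) (f : ι → α) : s.sup' hs (g ∘ f) = g (s.inf' hs f) := by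
  refine le_antisymm (sup'_le _ _ fun i hi => hg (inf'_le f hi)) ?_
  obtain ⟨i, hi, hfi⟩ := exists_mem_eq_inf' hs f
  exact hfi ▸ le_sup' (g ∘ f) hi

theorem Antitone.setOf_apply_eq_sup'_eq_setOf_eq_inf' [Fintype ι] [Nonempty ι] {g : α → β}
    (hg : Antitone g) {b : β} (hg' : StrictAntiOn g {x | b < g x}) (m : ι → α)
    (hb : b < univ.sup' univ_nonempty (g ∘ m)) :
    {i | (g ∘ m) i = univ.sup' univ_nonempty (g ∘ m)} = {i | m i = univ.inf' univ_nonempty m} := by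
  rw [hg.sup'_comp_eq_apply_inf'] at hb ⊢
  ext i
  simp only [Set.mem_ofPred_eq, Function.comp_apply]
  exact ⟨fun hi => hg'.injOn (show b < g (m i) from hi ▸ hb) hb hi, congrArg g⟩

end Extremal

section Hinge

variable {R : Type*} [Ring R] [LinearOrder R] [IsStrictOrderedRing R] {c : R} (a : R)

theorem antitone_mul_max_sub_zero (hc : 0 ≤ c) : Antitone fun x : R => c * max (a - x) 0 :=
  fun _ _ hxy => mul_le_mul_of_nonneg_left (max_le_max (sub_le_sub_left hxy a) le_rfl) hc

theorem strictAntiOn_mul_max_sub_zero :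
    StrictAntiOn (fun x : R => c * max (a - x) 0) {x | 0 < c * max (a - x) 0} := by
  intro x hx y _ hxy
  have hc : 0 < c := pos_of_mul_pos_left hx (le_max_right _ _)
  have hax : 0 < a - x := by simpa using pos_of_mul_pos_right hx hc.le
  have : max (a - y) 0 < max (a - x) 0 :=
    (max_lt (sub_lt_sub_left hxy a) hax).trans_le (le_max_left _ _)
  exact mul_lt_mul_of_pos_left this hc

end Hinge

/-- Proposition 5 part 2 (uniform bound `ν̲` and weight `W`): when the LPF and
ε-LPF squared voltages are related by `v̌ = ν₀ + (1+ε)·(v̂ − ν₀)` and both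
optimal losses of voltage regulation are strictly positive, the sets of
optimal attack strategies of the two master-problems coincide. -/
theorem lpf_epsLPF_same_optimal_attacks
    (Ψ I : Type*) [Fintype Ψ] [Fintype I] [Nonempty Ψ] [Nonempty I]
    (vhat : Ψ → I → ℝ) (ν₀ νlow W ε : ℝ) (hW : 0 < W) (hε : 0 < ε)
    (vcheck : Ψ → I → ℝ)
    (hvcheck : ∀ ψ i, vcheck ψ i = ν₀ + (1 + ε) * (vhat ψ i - ν₀))
    (Lhat Lcheck : Ψ → ℝ)
    (hLhat : ∀ ψ, Lhat ψ =
      Finset.univ.sup' Finset.univ_nonempty fun i => W * max (νlow - vhat ψ i) 0)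
    (hLcheck : ∀ ψ, Lcheck ψ =
      Finset.univ.sup' Finset.univ_nonempty fun i => W * max (νlow - vcheck ψ i) 0)
    (hpos_hat : 0 < Finset.univ.sup' Finset.univ_nonempty Lhat)
    (hpos_check : 0 < Finset.univ.sup' Finset.univ_nonempty Lcheck) :
    {ψ : Ψ | Lhat ψ = Finset.univ.sup' Finset.univ_nonempty Lhat} =
      {ψ : Ψ | Lcheck ψ = Finset.univ.sup' Finset.univ_nonempty Lcheck} := by
  set g := fun x : ℝ => W * max (νlow - x) 0
  set h := fun x : ℝ => ν₀ + (1 + ε) * (x - ν₀)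
  set m := fun ψ => univ.inf' univ_nonempty (vhat ψ)
  have hg : Antitone g := antitone_mul_max_sub_zero νlow hW.le
  have hh : StrictMono h := fun x y hxy => by simp only [h]; gcongr
  have hgh : Antitone (g ∘ h) := hg.comp_monotone hh.monotone
  have hLhat' : Lhat = g ∘ m :=
    funext fun ψ => (hLhat ψ).trans (hg.sup'_comp_eq_apply_inf' _ (vhat ψ))
  have hLcheck' : Lcheck = (g ∘ h) ∘ m := funext fun ψ => by
    rw [hLcheck ψ, Function.comp_apply, ← hgh.sup'_comp_eq_apply_inf']
    simp only [hvcheck]; rfl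
  have hg' : StrictAntiOn g {x | 0 < g x} := strictAntiOn_mul_max_sub_zero νlow
  have hgh' : StrictAntiOn (g ∘ h) {x | 0 < (g ∘ h) x} :=
    hg'.comp_strictMonoOn (hh.strictMonoOn _) fun _ hx => hx
  subst hLhat' hLcheck'
  exact (hg.setOf_apply_eq_sup'_eq_setOf_eq_inf' hg' m hpos_hat).trans
    (hgh.setOf_apply_eq_sup'_eq_setOf_eq_inf' hgh' m hpos_check).symm
end
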